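/- arXiv:2605.01874 — 6 statements merged into one kernel-verified Lean document; each statement's English description precedes it below -/
import Mathlib

section
/- Under the stated assumptions, the error rate of the subset selected by the k-NN rule satisfies α_S = α_noisy·(1 − λ0) / (α_noisy·(1 − λ0) + (1 − α_noisy)·λ1). -/
open MeasureTheory ProbabilityTheory ENNReal

private lemma fin2_cases (x : Fin 2) : x = 0 ∨ x = 1 := by fin_cases x <;> simp

private lemma two_cancel {X Y : ℝ≥0∞} (h : 2 * X = 2 * Y) : X = Y := by
  have h2 : (2:ℝ≥0∞) ≠ 0 := two_ne_zero
  have h2' : (2:ℝ≥0∞) ≠ ⊤ := ENNReal.ofNat_ne_top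
  have := congrArg (fun z => (2:ℝ≥0∞)⁻¹ * z) h
  simpa [← mul_assoc, ENNReal.inv_mul_cancel h2 h2'] using this

private lemma split_lemma {Ω : Type*} [MeasurableSpace Ω] (P : Measure Ω)
    (f : Ω → Fin 2) (hf : Measurable f) (S : Set Ω) (hS : MeasurableSet S) :
    P S = P (S ∩ {ω | f ω = 0}) + P (S ∩ {ω | f ω = 1}) := by
  have hu : (S ∩ {ω | f ω = 0}) ∪ (S ∩ {ω | f ω = 1}) = S := by
    ext ω
    constructor
    · rintro (⟨h, _⟩ | ⟨h, _⟩) <;> exact h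
    · intro h
      rcases fin2_cases (f ω) with h0 | h1
      · exact Or.inl ⟨h, h0⟩
      · exact Or.inr ⟨h, h1⟩
  have hdisj : Disjoint (S ∩ {ω | f ω = 0}) (S ∩ {ω | f ω = 1}) := by
    rw [Set.disjoint_left]
    rintro ω ⟨_, h0⟩ ⟨_, h1⟩
    rw [Set.mem_setOf_eq] at h0 h1
    rw [h0] at h1
    exact absurd h1 (by decide)
  have hm1 : MeasurableSet (S ∩ {ω | f ω = 1}) :=
    hS.inter (hf (measurableSet_singleton 1))
  conv_lhs => rw [← hu]
  exact measure_union hdisj hm1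

/-- **Performance of k-NN (class 0 error rate).**
Under balanced priors and conditional independence of the noisy label and the k-NN
prediction given the true label, the error rate of the subset selected by the k-NN rule
satisfies `α_S = α_noisy (1 - lam0) / (α_noisy (1 - lam0) + (1 - α_noisy) lam1)`. -/
theorem subset_error_rate_alpha
    {Ω : Type*} [MeasurableSpace Ω] (P : Measure Ω) [IsProbabilityMeasure P]
    (y yhat yknn : Ω → Fin 2)
    (hy : Measurable y) (hyhat : Measurable yhat) (hyknn : Measurable yknn)
    -- balanced priors
    (hbal0 : P {ω | y ω = 0} = 1 / 2) (hbal1 : P {ω | y ω = 1} = 1 / 2)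
    -- conditional independence given the true label
    (hcondind : ∀ c : Fin 2,
      P[{ω | yhat ω = 1 ∧ yknn ω = 1} | {ω | y ω = c}]
        = P[{ω | yhat ω = 1} | {ω | y ω = c}] * P[{ω | yknn ω = 1} | {ω | y ω = c}])
    -- positivity of the conditioning events
    (hpos_yhat : P {ω | yhat ω = 1} ≠ 0)
    (hpos_y0 : P {ω | y ω = 0} ≠ 0) (hpos_y1 : P {ω | y ω = 1} ≠ 0)
    (hpos_sub : P {ω | yhat ω = 1 ∧ yknn ω = 1} ≠ 0)
    -- the named quantities
    (αnoisy lam0 lam1 αS : ℝ≥0∞)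
    (hαnoisy : αnoisy = P[{ω | y ω = 0} | {ω | yhat ω = 1}])
    (hlam0 : lam0 = P[{ω | yknn ω = 0} | {ω | y ω = 0}])
    (hlam1 : lam1 = P[{ω | yknn ω = 1} | {ω | y ω = 1}])
    (hαS : αS = P[{ω | y ω = 0} | {ω | yhat ω = 1 ∧ yknn ω = 1}]) :
    αS = αnoisy * (1 - lam0) / (αnoisy * (1 - lam0) + (1 - αnoisy) * lam1) := by
  classical
  -- basic sets
  set A : Set Ω := {ω | y ω = 0} with hA_def
  set B : Set Ω := {ω | y ω = 1} with hB_def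
  set H : Set Ω := {ω | yhat ω = 1} with hH_def
  set K : Set Ω := {ω | yknn ω = 1} with hK_def
  set K0 : Set Ω := {ω | yknn ω = 0} with hK0_def
  have hHK : {ω | yhat ω = 1 ∧ yknn ω = 1} = H ∩ K := rfl
  have hmA : MeasurableSet A := hy (measurableSet_singleton 0)
  have hmB : MeasurableSet B := hy (measurableSet_singleton 1)
  have hmH : MeasurableSet H := hyhat (measurableSet_singleton 1)
  have hmK : MeasurableSet K := hyknn (measurableSet_singleton 1)
  have hmK0 : MeasurableSet K0 := hyknn (measurableSet_singleton 0)
  have hmHK : MeasurableSet (H ∩ K) := hmH.inter hmK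
  -- abbreviations for joint probabilities
  set u : ℝ≥0∞ := P (A ∩ H) with hu_def
  set v : ℝ≥0∞ := P (B ∩ H) with hv_def
  set p : ℝ≥0∞ := P (A ∩ K) with hp_def
  set q : ℝ≥0∞ := P (B ∩ K) with hq_def
  set p0 : ℝ≥0∞ := P (A ∩ K0) with hp0_def
  have h2 : ((1:ℝ≥0∞)/2)⁻¹ = 2 := by rw [one_div, inv_inv]
  have hfin : ∀ S : Set Ω, P S ≠ ⊤ := fun S => measure_ne_top P S
  -- conditional independence, unfolded, c = 0
  have hci0 : P (A ∩ (H ∩ K)) = 2 * (u * p) := by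
    have h := hcondind 0
    rw [hHK, cond_apply hmA, cond_apply hmA, cond_apply hmA, hbal0, h2] at h
    have h' : 2 * P (A ∩ (H ∩ K)) = 2 * (2 * (u * p)) := by
      rw [h, hu_def, hp_def]; ring
    exact two_cancel h'
  have hci1 : P (B ∩ (H ∩ K)) = 2 * (v * q) := by
    have h := hcondind 1
    rw [hHK, cond_apply hmB, cond_apply hmB, cond_apply hmB, hbal1, h2] at h
    have h' : 2 * P (B ∩ (H ∩ K)) = 2 * (2 * (v * q)) := by
      rw [h, hv_def, hq_def]; ring
    exact two_cancel h'
  -- split P H and P (H ∩ K) over the true label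
  have hHsplit : P H = u + v := by
    rw [hu_def, hv_def, Set.inter_comm A H, Set.inter_comm B H]
    exact split_lemma P y hy H hmH
  have hHKsplit : P (H ∩ K) = 2 * (u * p) + 2 * (v * q) := by
    rw [← hci0, ← hci1, Set.inter_comm A _, Set.inter_comm B _]
    exact split_lemma P y hy (H ∩ K) hmHK
  -- λ0 and 1 - λ0
  have hAsplit : (1:ℝ≥0∞) = 2 * p0 + 2 * p := by
    have hs := split_lemma P yknn hyknn A hmA
    rw [hbal0, ← hK0_def, ← hK_def, ← hp0_def, ← hp_def] at hs
    rw [← mul_add, ← hs, one_div, ENNReal.mul_inv_cancel two_ne_zero ENNReal.ofNat_ne_top]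
  have hlam0' : lam0 = 2 * p0 := by
    rw [hlam0, cond_apply hmA, hbal0, h2]
  have h1lam0 : 1 - lam0 = 2 * p := by
    rw [hlam0', hAsplit]
    exact ENNReal.add_sub_cancel_left (by
      exact ENNReal.mul_ne_top ENNReal.ofNat_ne_top (hfin _))
  -- λ1
  have hlam1' : lam1 = 2 * q := by
    rw [hlam1, cond_apply hmB, hbal1, h2]
  -- α_noisy and 1 - α_noisy
  have hHne : P H ≠ 0 := hpos_yhat
  have hHnetop : P H ≠ ⊤ := hfin H
  have hαn : αnoisy = (P H)⁻¹ * u := by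
    rw [hαnoisy, cond_apply hmH, hu_def, Set.inter_comm]
  have hsum1 : (P H)⁻¹ * u + (P H)⁻¹ * v = 1 := by
    rw [← mul_add, ← hHsplit, ENNReal.inv_mul_cancel hHne hHnetop]
  have h1αn : 1 - αnoisy = (P H)⁻¹ * v := by
    rw [hαn, ← hsum1]
    exact ENNReal.add_sub_cancel_left (by
      exact ENNReal.mul_ne_top (ENNReal.inv_ne_top.mpr hHne) (hfin _))
  -- α_S
  have hαS' : αS = 2 * (u * p) / (2 * (u * p) + 2 * (v * q)) := by
    rw [hαS, hHK, cond_apply hmHK, hHKsplit, Set.inter_comm, hci0,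
      div_eq_mul_inv, mul_comm]
  -- put everything together
  rw [hαS', h1lam0, hlam1', h1αn, hαn]
  have hrhs : (P H)⁻¹ * u * (2 * p) / ((P H)⁻¹ * u * (2 * p) + (P H)⁻¹ * v * (2 * q))
      = (P H)⁻¹ * (2 * (u * p)) / ((P H)⁻¹ * (2 * (u * p) + 2 * (v * q))) := by
    congr 1
    · ring
    · ring
  rw [hrhs, ENNReal.mul_div_mul_left _ _ (ENNReal.inv_ne_zero.mpr hHnetop)
    (ENNReal.inv_ne_top.mpr hHne)]
end

section
/- Under the stated assumptions, the error rate of the subset selected by the k-NN rule satisfies γ_S = γ_noisy·(1 − λ1) / (γ_noisy·(1 − λ1) + (1 − γ_noisy)·λ0). -/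
open MeasureTheory ProbabilityTheory ENNReal

private lemma subset_error_aux (x y s : ℝ≥0∞) (hs0 : s ≠ 0) (hstop : s ≠ ⊤)
    (hxy : x + y ≠ 0) (hxytop : x + y ≠ ⊤) :
    x / (y + x) = (x / s) / (x / s + y / s) := by
  rw [ENNReal.div_add_div_same]
  rw [ENNReal.div_eq_div_iff
    (ENNReal.div_ne_zero.2 ⟨hxy, hstop⟩)
    (ENNReal.div_lt_top hxytop hs0).ne
    (by rw [add_comm]; exact hxy) (by rw [add_comm]; exact hxytop)]
  rw [div_eq_mul_inv, div_eq_mul_inv]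
  ring

/-- **Performance of k-NN (class 1 error rate).**
Under balanced priors and conditional independence of the noisy label and the k-NN
prediction given the true label, the error rate of the subset selected by the k-NN rule
satisfies `γ_S = γ_noisy (1 - λ1) / (γ_noisy (1 - λ1) + (1 - γ_noisy) λ0)`. -/
theorem subset_error_rate_gamma
    {Ω : Type*} [MeasurableSpace Ω] (P : Measure Ω) [IsProbabilityMeasure P]
    (y yhat yknn : Ω → Fin 2)
    (hy : Measurable y) (hyhat : Measurable yhat) (hyknn : Measurable yknn)
    -- balanced priors
    (hbal0 : P {ω | y ω = 0} = 1 / 2) (hbal1 : P {ω | y ω = 1} = 1 / 2)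
    -- conditional independence given the true label
    (hcondind : ∀ c : Fin 2,
      P[{ω | yhat ω = 0 ∧ yknn ω = 0} | {ω | y ω = c}]
        = P[{ω | yhat ω = 0} | {ω | y ω = c}] * P[{ω | yknn ω = 0} | {ω | y ω = c}])
    -- positivity of the conditioning events
    (hpos_yhat : P {ω | yhat ω = 0} ≠ 0)
    (hpos_y0 : P {ω | y ω = 0} ≠ 0) (hpos_y1 : P {ω | y ω = 1} ≠ 0)
    (hpos_sub : P {ω | yhat ω = 0 ∧ yknn ω = 0} ≠ 0)
    -- the named quantities
    (γnoisy lam0 lam1 γS : ℝ≥0∞)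
    (hγnoisy : γnoisy = P[{ω | y ω = 1} | {ω | yhat ω = 0}])
    (hlam0 : lam0 = P[{ω | yknn ω = 0} | {ω | y ω = 0}])
    (hlam1 : lam1 = P[{ω | yknn ω = 1} | {ω | y ω = 1}])
    (hγS : γS = P[{ω | y ω = 1} | {ω | yhat ω = 0 ∧ yknn ω = 0}]) :
    γS = γnoisy * (1 - lam1) / (γnoisy * (1 - lam1) + (1 - γnoisy) * lam0) := by
  -- Sets
  set s0 : Set Ω := {ω | y ω = 0} with hs0def
  set s1 : Set Ω := {ω | y ω = 1} with hs1def
  set B : Set Ω := {ω | yhat ω = 0} with hBdef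
  set K : Set Ω := {ω | yknn ω = 0} with hKdef
  set K1 : Set Ω := {ω | yknn ω = 1} with hK1def
  set S : Set Ω := {ω | yhat ω = 0 ∧ yknn ω = 0} with hSdef
  have hSeq : S = B ∩ K := by ext ω; simp [hSdef, hBdef, hKdef, Set.mem_inter_iff]
  -- Measurability
  have hms0 : MeasurableSet s0 := hy (measurableSet_singleton 0)
  have hms1 : MeasurableSet s1 := hy (measurableSet_singleton 1)
  have hmB : MeasurableSet B := hyhat (measurableSet_singleton 0)
  have hmK : MeasurableSet K := hyknn (measurableSet_singleton 0)
  have hmK1 : MeasurableSet K1 := hyknn (measurableSet_singleton 1)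
  have hmS : MeasurableSet S := hSeq ▸ hmB.inter hmK
  -- the split lemma: s0 and s1 partition Ω
  have hsplit : ∀ A : Set Ω, MeasurableSet A → P (s0 ∩ A) + P (s1 ∩ A) = P A := by
    intro A hA
    have hdisj : Disjoint (s0 ∩ A) (s1 ∩ A) := by
      refine Set.disjoint_left.2 ?_
      rintro ω ⟨h0, -⟩ ⟨h1, -⟩
      rw [hs0def] at h0; rw [hs1def] at h1
      simp only [Set.mem_setOf_eq] at h0 h1
      rw [h0] at h1; exact absurd h1 (by decide)
    have hunion : (s0 ∩ A) ∪ (s1 ∩ A) = A := by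
      rw [← Set.union_inter_distrib_right]
      have : s0 ∪ s1 = Set.univ := by
        ext ω
        have : y ω = 0 ∨ y ω = 1 := by
          rcases (show ∀ x : Fin 2, x = 0 ∨ x = 1 by decide) (y ω) with h | h
          · exact Or.inl h
          · exact Or.inr h
        simpa [hs0def, hs1def] using this
      rw [this, Set.univ_inter]
    rw [← measure_union hdisj (hms1.inter hA), hunion]
  -- split lemma for conditioning on s0/s1
  have hsplitc : ∀ A : Set Ω, MeasurableSet A → ∀ c : Set Ω, MeasurableSet c →
      P (c ∩ A) + P (c ∩ Aᶜ) = P c := by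
    intro A hA c hc
    rw [← measure_union (Set.disjoint_left.2 (by rintro ω ⟨-, h⟩ ⟨-, h'⟩; exact h' h))
      (hc.inter hA.compl), Set.inter_union_compl]
  -- shorthand quantities
  set a0 : ℝ≥0∞ := P (s0 ∩ B) with ha0
  set a1 : ℝ≥0∞ := P (s1 ∩ B) with ha1
  set k0 : ℝ≥0∞ := P (s0 ∩ K) with hk0
  set k1 : ℝ≥0∞ := P (s1 ∩ K) with hk1
  set u0 : ℝ≥0∞ := P (s0 ∩ S) with hu0
  set u1 : ℝ≥0∞ := P (s1 ∩ S) with hu1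
  have hfin : ∀ t : Set Ω, P t ≠ ⊤ := fun t => measure_ne_top P t
  have two_ne_top : (2 : ℝ≥0∞) ≠ ⊤ := by norm_num
  have two_ne_zero : (2 : ℝ≥0∞) ≠ 0 := by norm_num
  -- inverses of balanced priors
  have hinv0 : (P s0)⁻¹ = 2 := by rw [hbal0, one_div, inv_inv]
  have hinv1 : (P s1)⁻¹ = 2 := by rw [hbal1, one_div, inv_inv]
  -- conditional probabilities in terms of joint probabilities
  have hγn : γnoisy = a1 / (a0 + a1) := by
    rw [hγnoisy, cond_apply hmB, Set.inter_comm, ← ha1]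
    rw [show P B = a0 + a1 from (hsplit B hmB).symm]
    rw [mul_comm, div_eq_mul_inv]
  have hlam0' : lam0 = 2 * k0 := by
    rw [hlam0, cond_apply hms0, hinv0, ← hk0]
  have hlam1' : lam1 = 2 * P (s1 ∩ K1) := by
    rw [hlam1, cond_apply hms1, hinv1]
  -- `1 - lam1 = 2 * k1`
  have hKcompl : s1 ∩ K1 = s1 ∩ Kᶜ := by
    ext ω
    simp only [Set.mem_inter_iff, Set.mem_compl_iff, hK1def, hKdef, Set.mem_setOf_eq,
      and_congr_right_iff]
    intro _
    constructor
    · intro h h'; rw [h'] at h; exact absurd h (by decide)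
    · intro h
      rcases (show ∀ x : Fin 2, x = 0 ∨ x = 1 by decide) (yknn ω) with h' | h'
      · exact absurd h' h
      · exact h'
  have hone : 2 * k1 + lam1 = 1 := by
    rw [hlam1', hKcompl, ← mul_add, hsplitc K hmK s1 hms1, hbal1, one_div,
      ENNReal.mul_inv_cancel two_ne_zero two_ne_top]
  have hsub1 : 1 - lam1 = 2 * k1 :=
    ENNReal.sub_eq_of_eq_add (by rw [hlam1']; exact ENNReal.mul_ne_top two_ne_top (hfin _))
      hone.symm
  -- conditional independence consequences
  have hu1' : u1 = a1 * (2 * k1) := by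
    have h := hcondind 1
    rw [cond_apply hms1, cond_apply hms1, cond_apply hms1, hinv1] at h
    have h2 : 2 * u1 = 2 * (a1 * (2 * k1)) := by rw [hu1, ha1, hk1, h]; ring
    exact (ENNReal.mul_right_inj two_ne_zero two_ne_top).1 h2
  have hu0' : u0 = a0 * (2 * k0) := by
    have h := hcondind 0
    rw [cond_apply hms0, cond_apply hms0, cond_apply hms0, hinv0] at h
    have h2 : 2 * u0 = 2 * (a0 * (2 * k0)) := by rw [hu0, ha0, hk0, h]; ring
    exact (ENNReal.mul_right_inj two_ne_zero two_ne_top).1 h2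
  -- γS as a ratio
  have hγS' : γS = u1 / (u0 + u1) := by
    rw [hγS, cond_apply hmS, Set.inter_comm, ← hu1]
    rw [show P S = u0 + u1 from (hsplit S hmS).symm]
    rw [mul_comm, div_eq_mul_inv]
  -- denominator facts
  have hPB : P B = a0 + a1 := (hsplit B hmB).symm
  have hsne0 : a0 + a1 ≠ 0 := by rw [← hPB]; exact hpos_yhat
  have hsnetop : a0 + a1 ≠ ⊤ := by rw [← hPB]; exact hfin B
  have hPS : P S = u0 + u1 := (hsplit S hmS).symm
  have hune0 : u0 + u1 ≠ 0 := by rw [← hPS]; exact hpos_sub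
  have hunetop : u0 + u1 ≠ ⊤ := by rw [← hPS]; exact hfin S
  -- 1 - γnoisy = a0 / (a0 + a1)
  have hsubγ : 1 - γnoisy = a0 / (a0 + a1) := by
    refine ENNReal.sub_eq_of_eq_add (by rw [hγn]; exact (ENNReal.div_lt_top (hfin _) hsne0).ne) ?_
    rw [hγn, ENNReal.div_add_div_same, ENNReal.div_self hsne0 hsnetop]
  -- put everything together
  rw [hγS', hu1', hu0', hsub1, hsubγ, hγn, hlam0']
  have hx : a1 / (a0 + a1) * (2 * k1) = a1 * (2 * k1) / (a0 + a1) := by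
    rw [div_eq_mul_inv, div_eq_mul_inv]; ring
  have hy' : a0 / (a0 + a1) * (2 * k0) = a0 * (2 * k0) / (a0 + a1) := by
    rw [div_eq_mul_inv, div_eq_mul_inv]; ring
  rw [hx, hy']
  exact subset_error_aux (a1 * (2 * k1)) (a0 * (2 * k0)) (a0 + a1) hsne0 hsnetop
    (by rw [add_comm, ← hu0', ← hu1']; exact hune0)
    (by rw [add_comm, ← hu0', ← hu1']; exact hunetop)
end

section
/- If in addition the k-NN classifier has error P(y^knn ≠ y) ≤ 1/2 (equivalently, λ0 + λ1 ≥ 1 under balanced priors), then the subset error rates satisfy α_S ≤ α_noisy. -/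
open MeasureTheory ProbabilityTheory ENNReal

/-!
Conditioning on the k-NN vote `K = {y^knn = 1}` multiplies the odds of `y = 0` against `y = 1`
among `{ŷ = 1}` by the likelihood ratio `P[K | y = 0] / P[K | y = 1]` (conditional independence).
With balanced priors, an error rate of at most `1/2` means `P(y = 0, K) ≤ P(y = 1, K)`, so this
ratio is at most `1`.
-/

namespace ProbabilityTheory

variable {Ω : Type*} [MeasurableSpace Ω] {μ : Measure Ω} [IsFiniteMeasure μ] {A H K S : Set Ω}

theorem measure_inter_le_measure_compl_inter_of_add_le (h : μ (A ∩ K) + μ (Aᶜ \ K) ≤ μ Aᶜ) :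
    μ (A ∩ K) ≤ μ (Aᶜ ∩ K) :=
  ENNReal.le_of_add_le_add_right (measure_ne_top μ _)
    (h.trans (measure_le_inter_add_sdiff μ Aᶜ K))

theorem cond_le_cond_compl_of_measure_eq (hA : MeasurableSet A) (hAc : μ A = μ Aᶜ)
    (h : μ (A ∩ K) + μ (Aᶜ \ K) ≤ μ Aᶜ) : μ[K | A] ≤ μ[K | Aᶜ] := by
  rw [cond_apply hA, cond_apply hA.compl, hAc]
  exact mul_le_mul_right (measure_inter_le_measure_compl_inter_of_add_le h) _

theorem cond_le_cond_of_mul_le (hA : MeasurableSet A) (hSH : S ⊆ H)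
    (h : μ (A ∩ S) * μ (Aᶜ ∩ H) ≤ μ (Aᶜ ∩ S) * μ (A ∩ H)) : μ[A | S] ≤ μ[A | H] := by
  rcases eq_or_ne (μ S) 0 with hS | hS
  · simp [cond_eq_zero_of_meas_eq_zero hS]
  have hH : μ H ≠ 0 := fun hH => hS (measure_mono_null hSH hH)
  have hsplit : ∀ T, μ T = μ (A ∩ T) + μ (Aᶜ ∩ T) := fun T => by
    rw [Set.inter_comm A, Set.inter_comm Aᶜ, ← Set.sdiff_eq, measure_inter_add_sdiff T hA]
  rw [cond_apply' hA, cond_apply' hA, ENNReal.inv_mul_le_iff hS (measure_ne_top μ S),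
    mul_left_comm, ← ENNReal.mul_le_iff_le_inv hH (measure_ne_top μ H), Set.inter_comm S,
    Set.inter_comm H, hsplit H, hsplit S, add_mul, add_mul, mul_comm (μ (A ∩ H))]
  exact add_le_add le_rfl (by rwa [mul_comm])

theorem cond_inter_le_cond_of_condIndep (hA : MeasurableSet A)
    (hind : μ[H ∩ K | A] = μ[H | A] * μ[K | A])
    (hind_compl : μ[H ∩ K | Aᶜ] = μ[H | Aᶜ] * μ[K | Aᶜ])
    (hK : μ[K | A] ≤ μ[K | Aᶜ]) : μ[A | H ∩ K] ≤ μ[A | H] := by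
  refine cond_le_cond_of_mul_le hA Set.inter_subset_left ?_
  rw [← cond_mul_eq_inter hA, ← cond_mul_eq_inter hA.compl, ← cond_mul_eq_inter hA,
    ← cond_mul_eq_inter hA.compl, hind, hind_compl]
  calc μ[H | A] * μ[K | A] * μ A * (μ[H | Aᶜ] * μ Aᶜ)
      = μ[H | A] * μ A * (μ[H | Aᶜ] * μ Aᶜ) * μ[K | A] := by ring
    _ ≤ μ[H | A] * μ A * (μ[H | Aᶜ] * μ Aᶜ) * μ[K | Aᶜ] := by gcongr
    _ = μ[H | Aᶜ] * μ[K | Aᶜ] * μ Aᶜ * (μ[H | A] * μ A) := by ring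

end ProbabilityTheory

theorem subset_error_rate_alpha_le_general
    {Ω : Type*} [MeasurableSpace Ω] (P : Measure Ω) [IsProbabilityMeasure P]
    (y yhat yknn : Ω → Fin 2)
    (hy : Measurable y)
    -- balanced priors
    (hbal0 : P {ω | y ω = 0} = 1 / 2) (hbal1 : P {ω | y ω = 1} = 1 / 2)
    -- conditional independence given the true label
    (hcondind : ∀ c : Fin 2,
      P[{ω | yhat ω = 1 ∧ yknn ω = 1} | {ω | y ω = c}]
        = P[{ω | yhat ω = 1} | {ω | y ω = c}] * P[{ω | yknn ω = 1} | {ω | y ω = c}])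
    -- the named quantities
    (αnoisy αS : ℝ≥0∞)
    (hαnoisy : αnoisy = P[{ω | y ω = 0} | {ω | yhat ω = 1}])
    (hαS : αS = P[{ω | y ω = 0} | {ω | yhat ω = 1 ∧ yknn ω = 1}])
    -- the k-NN classifier is no worse than random guessing
    (herr : P {ω | yknn ω ≠ y ω} ≤ 1 / 2) :
    αS ≤ αnoisy := by
  have hA : MeasurableSet {ω | y ω = 0} := hy (measurableSet_singleton 0)
  have hAc : {ω | y ω = 0}ᶜ = {ω | y ω = 1} := by
    ext ω
    simp only [Set.mem_compl_iff, Set.mem_ofPred_eq]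
    omega
  have hind_compl := hcondind 1
  rw [← hAc] at hbal1 hind_compl
  have herr_split : P {ω | yknn ω ≠ y ω}
      = P ({ω | y ω = 0} ∩ {ω | yknn ω = 1}) + P ({ω | y ω = 0}ᶜ \ {ω | yknn ω = 1}) := by
    rw [← measure_inter_add_sdiff _ hA]
    congr 2 <;> ext ω <;>
      simp only [Set.mem_inter_iff, Set.mem_sdiff, Set.mem_compl_iff, Set.mem_ofPred_eq] <;> omega
  have hknn : P[{ω | yknn ω = 1} | {ω | y ω = 0}] ≤ P[{ω | yknn ω = 1} | {ω | y ω = 0}ᶜ] :=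
    cond_le_cond_compl_of_measure_eq hA (hbal0.trans hbal1.symm)
      (by rwa [hbal1, ← herr_split])
  rw [hαS, hαnoisy]
  exact cond_inter_le_cond_of_condIndep hA (hcondind 0) hind_compl hknn

/-- If in addition the k-NN classifier has error `P(y^knn ≠ y) ≤ 1/2`, then the subset
error rate satisfies `α_S ≤ α_noisy`. -/
theorem subset_error_rate_alpha_le
    {Ω : Type*} [MeasurableSpace Ω] (P : Measure Ω) [IsProbabilityMeasure P]
    (y yhat yknn : Ω → Fin 2)
    (hy : Measurable y) (hyhat : Measurable yhat) (hyknn : Measurable yknn)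
    -- balanced priors
    (hbal0 : P {ω | y ω = 0} = 1 / 2) (hbal1 : P {ω | y ω = 1} = 1 / 2)
    -- conditional independence given the true label
    (hcondind : ∀ c : Fin 2,
      P[{ω | yhat ω = 1 ∧ yknn ω = 1} | {ω | y ω = c}]
        = P[{ω | yhat ω = 1} | {ω | y ω = c}] * P[{ω | yknn ω = 1} | {ω | y ω = c}])
    -- positivity of the conditioning events
    (hpos_yhat : P {ω | yhat ω = 1} ≠ 0)
    (hpos_y0 : P {ω | y ω = 0} ≠ 0) (hpos_y1 : P {ω | y ω = 1} ≠ 0)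
    (hpos_sub : P {ω | yhat ω = 1 ∧ yknn ω = 1} ≠ 0)
    -- the named quantities
    (αnoisy lam0 lam1 αS : ℝ≥0∞)
    (hαnoisy : αnoisy = P[{ω | y ω = 0} | {ω | yhat ω = 1}])
    (hlam0 : lam0 = P[{ω | yknn ω = 0} | {ω | y ω = 0}])
    (hlam1 : lam1 = P[{ω | yknn ω = 1} | {ω | y ω = 1}])
    (hαS : αS = P[{ω | y ω = 0} | {ω | yhat ω = 1 ∧ yknn ω = 1}])
    -- the k-NN classifier is no worse than random guessing
    (herr : P {ω | yknn ω ≠ y ω} ≤ 1 / 2) :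
    αS ≤ αnoisy :=
  subset_error_rate_alpha_le_general P y yhat yknn hy hbal0 hbal1 hcondind αnoisy αS hαnoisy hαS
    herr
end

section
/- If in addition the k-NN classifier has error P(y^knn ≠ y) ≤ 1/2 (equivalently, λ0 + λ1 ≥ 1 under balanced priors), then the subset error rates satisfy γ_S ≤ γ_noisy. -/
/-!
Writing `a_c = P(y = c, ŷ = 0)` and `m_c = P(y^knn = 0 | y = c)`, conditional independence gives
`P(y = c, ŷ = 0, y^knn = 0) = a_c m_c`, so by Bayes
`γ_S = a₁ m₁ / (a₀ m₀ + a₁ m₁)` and `γ_noisy = a₁ / (a₀ + a₁)`.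
With balanced priors the error bound says exactly `m₁ = 1 - λ₁ ≤ λ₀ = m₀`, and shrinking `m₀` to `m₁`
in the denominator turns the first fraction into the second.
-/

open MeasureTheory ProbabilityTheory ENNReal

namespace ENNReal

theorem mul_div_add_mul_le_div_add {a b m₀ m₁ : ℝ≥0∞} (hm : m₁ ≤ m₀) (hm₁ : m₁ ≠ ∞) :
    b * m₁ / (a * m₀ + b * m₁) ≤ b / (a + b) := by
  rcases eq_or_ne m₁ 0 with rfl | hm₁₀
  · simp
  calc b * m₁ / (a * m₀ + b * m₁) ≤ b * m₁ / ((a + b) * m₁) := by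
        rw [add_mul]; gcongr
    _ = b / (a + b) := ENNReal.mul_div_mul_right _ _ hm₁₀ hm₁

end ENNReal

section BinaryLabels

variable {Ω : Type*} [MeasurableSpace Ω] {μ : Measure Ω} {y : Ω → Fin 2}

theorem measure_inter_cond_eq_of_condIndep [IsFiniteMeasure μ] {s A B : Set Ω}
    (hs : MeasurableSet s) (h : μ[A ∩ B | s] = μ[A | s] * μ[B | s]) :
    μ (s ∩ (A ∩ B)) = μ (s ∩ A) * μ[B | s] := by
  rw [← cond_mul_eq_inter hs, ← cond_mul_eq_inter hs, h, mul_right_comm]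

theorem cond_eq_one_eq_div (hy : Measurable y) (T : Set Ω) :
    μ[{ω | y ω = 1} | T] =
      μ ({ω | y ω = 1} ∩ T) / (μ ({ω | y ω = 0} ∩ T) + μ ({ω | y ω = 1} ∩ T)) := by
  have hy₀ : MeasurableSet {ω | y ω = 0} := hy (measurableSet_singleton 0)
  have hy₁ : MeasurableSet {ω | y ω = 1} := hy (measurableSet_singleton 1)
  have hsdiff : T \ {ω | y ω = 0} = {ω | y ω = 1} ∩ T := by
    ext ω; simp only [Set.mem_sdiff, Set.mem_inter_iff, Set.mem_ofPred_eq]; grind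
  rw [cond_apply' hy₁, ENNReal.div_eq_inv_mul, Set.inter_comm T,
    ← measure_inter_add_sdiff T hy₀, hsdiff, Set.inter_comm T]

theorem measure_eq_one_inter_le_eq_zero_inter [IsFiniteMeasure μ] (hy : Measurable y)
    {k : Ω → Fin 2} (herr : μ {ω | k ω ≠ y ω} ≤ μ {ω | y ω = 0}) :
    μ ({ω | y ω = 1} ∩ {ω | k ω = 0}) ≤ μ ({ω | y ω = 0} ∩ {ω | k ω = 0}) := by
  have hy₀ : MeasurableSet {ω | y ω = 0} := hy (measurableSet_singleton 0)
  have hsplit : μ ({ω | y ω = 1} ∩ {ω | k ω = 0}) + μ ({ω | y ω = 0} ∩ {ω | k ω = 1})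
      ≤ μ ({ω | y ω = 0} ∩ {ω | k ω = 0}) + μ ({ω | y ω = 0} ∩ {ω | k ω = 1}) :=
    calc _ = μ {ω | k ω ≠ y ω} := by
          have hmiss₀ : {ω | k ω ≠ y ω} ∩ {ω | y ω = 0} = {ω | y ω = 0} ∩ {ω | k ω = 1} := by
            ext ω; simp only [Set.mem_inter_iff, Set.mem_ofPred_eq]; omega
          have hmiss₁ : {ω | k ω ≠ y ω} \ {ω | y ω = 0} = {ω | y ω = 1} ∩ {ω | k ω = 0} := by
            ext ω; simp only [Set.mem_sdiff, Set.mem_inter_iff, Set.mem_ofPred_eq]; omega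
          rw [← measure_inter_add_sdiff {ω | k ω ≠ y ω} hy₀, hmiss₀, hmiss₁, add_comm]
      _ ≤ μ {ω | y ω = 0} := herr
      _ ≤ _ := by
          refine (measure_mono fun ω hω ↦ ?_).trans (measure_union_le _ _)
          simp only [Set.mem_union, Set.mem_inter_iff, Set.mem_ofPred_eq] at hω ⊢
          omega
  exact (ENNReal.add_le_add_iff_right (measure_ne_top _ _)).mp hsplit

theorem cond_eq_one_le_cond_eq_zero [IsFiniteMeasure μ] (hy : Measurable y) {k : Ω → Fin 2}
    (hbal : μ {ω | y ω = 0} = μ {ω | y ω = 1}) (herr : μ {ω | k ω ≠ y ω} ≤ μ {ω | y ω = 0}) :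
    μ[{ω | k ω = 0} | {ω | y ω = 1}] ≤ μ[{ω | k ω = 0} | {ω | y ω = 0}] := by
  have hy₀ : MeasurableSet {ω | y ω = 0} := hy (measurableSet_singleton 0)
  have hy₁ : MeasurableSet {ω | y ω = 1} := hy (measurableSet_singleton 1)
  rw [cond_apply hy₁, cond_apply hy₀, hbal]
  exact mul_le_mul_of_nonneg_left (measure_eq_one_inter_le_eq_zero_inter hy herr) zero_le

end BinaryLabels

theorem subset_error_rate_gamma_le_general
    {Ω : Type*} [MeasurableSpace Ω] (P : Measure Ω) [IsProbabilityMeasure P]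
    (y yhat yknn : Ω → Fin 2)
    (hy : Measurable y)
    -- balanced priors
    (hbal0 : P {ω | y ω = 0} = 1 / 2) (hbal1 : P {ω | y ω = 1} = 1 / 2)
    -- conditional independence given the true label
    (hcondind : ∀ c : Fin 2,
      P[{ω | yhat ω = 0 ∧ yknn ω = 0} | {ω | y ω = c}]
        = P[{ω | yhat ω = 0} | {ω | y ω = c}] * P[{ω | yknn ω = 0} | {ω | y ω = c}])
    -- the named quantities
    (γnoisy γS : ℝ≥0∞)
    (hγnoisy : γnoisy = P[{ω | y ω = 1} | {ω | yhat ω = 0}])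
    (hγS : γS = P[{ω | y ω = 1} | {ω | yhat ω = 0 ∧ yknn ω = 0}])
    -- the k-NN classifier is no worse than random guessing
    (herr : P {ω | yknn ω ≠ y ω} ≤ 1 / 2) :
    γS ≤ γnoisy := by
  have hsubset : ∀ c : Fin 2, P ({ω | y ω = c} ∩ {ω | yhat ω = 0 ∧ yknn ω = 0}) =
      P ({ω | y ω = c} ∩ {ω | yhat ω = 0}) * P[{ω | yknn ω = 0} | {ω | y ω = c}] := fun c ↦
    measure_inter_cond_eq_of_condIndep (hy (measurableSet_singleton c)) (hcondind c)
  have hknn : P[{ω | yknn ω = 0} | {ω | y ω = 1}] ≤ P[{ω | yknn ω = 0} | {ω | y ω = 0}] :=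
    cond_eq_one_le_cond_eq_zero hy (hbal0.trans hbal1.symm) (herr.trans hbal0.ge)
  rw [hγS, hγnoisy, cond_eq_one_eq_div hy, cond_eq_one_eq_div hy, hsubset 0, hsubset 1]
  exact mul_div_add_mul_le_div_add hknn (measure_ne_top _ _)

/-- If in addition the k-NN classifier has error `P(y^knn ≠ y) ≤ 1/2`, then the subset
error rate satisfies `γ_S ≤ γ_noisy`. -/
theorem subset_error_rate_gamma_le
    {Ω : Type*} [MeasurableSpace Ω] (P : Measure Ω) [IsProbabilityMeasure P]
    (y yhat yknn : Ω → Fin 2)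
    (hy : Measurable y) (hyhat : Measurable yhat) (hyknn : Measurable yknn)
    -- balanced priors
    (hbal0 : P {ω | y ω = 0} = 1 / 2) (hbal1 : P {ω | y ω = 1} = 1 / 2)
    -- conditional independence given the true label
    (hcondind : ∀ c : Fin 2,
      P[{ω | yhat ω = 0 ∧ yknn ω = 0} | {ω | y ω = c}]
        = P[{ω | yhat ω = 0} | {ω | y ω = c}] * P[{ω | yknn ω = 0} | {ω | y ω = c}])
    -- positivity of the conditioning events
    (hpos_yhat : P {ω | yhat ω = 0} ≠ 0)
    (hpos_y0 : P {ω | y ω = 0} ≠ 0) (hpos_y1 : P {ω | y ω = 1} ≠ 0)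
    (hpos_sub : P {ω | yhat ω = 0 ∧ yknn ω = 0} ≠ 0)
    -- the named quantities
    (γnoisy lam0 lam1 γS : ℝ≥0∞)
    (hγnoisy : γnoisy = P[{ω | y ω = 1} | {ω | yhat ω = 0}])
    (hlam0 : lam0 = P[{ω | yknn ω = 0} | {ω | y ω = 0}])
    (hlam1 : lam1 = P[{ω | yknn ω = 1} | {ω | y ω = 1}])
    (hγS : γS = P[{ω | y ω = 1} | {ω | yhat ω = 0 ∧ yknn ω = 0}])
    -- the k-NN classifier is no worse than random guessing
    (herr : P {ω | yknn ω ≠ y ω} ≤ 1 / 2) :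
    γS ≤ γnoisy :=
  subset_error_rate_gamma_le_general P y yhat yknn hy hbal0 hbal1 hcondind γnoisy γS hγnoisy hγS
    herr
end

section
/- Let ω, p0, Δ, C_l be positive reals, n ≥ 1 a real, ν ∈ (0,1), and ρ ∈ (0,1]. Set K_u(d) = ω · V_d · p0 (where V_d is the volume of the unit Euclidean ball in ℝ^d) and K_l(d) = C_l · d. Then there exists a threshold d0 ∈ ℕ such that for all d ≥ d0, K_u(d) · Δ^d · n < K_l(d) · (log(1/ν))² · n^{ρ/(ρ+d)}. In particular, for d ≥ d0 there is no natural number k satisfying K_l(d) · (log(1/ν))² · n^{ρ/(ρ+d)} ≤ k ≤ K_u(d) · Δ^d · n. -/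
/-
The volume factor `V_d Δ^d = (√π Δ)^d / Γ(d/2 + 1)` decays super-exponentially, since
`Γ(d/2 + 1) ≥ ⌊d/2⌋!` while `(√π Δ)^d` grows only geometrically; so `K_u(d) Δ^d n → 0`
as `d → ∞`. The lower endpoint `K_l(d) (log(1/ν))² n^(ρ/(ρ+d))` stays at least
`C_l (log(1/ν))² > 0` for `d ≥ 1`, so it eventually exceeds the upper one.
-/

/-- `V_d = π^(d/2) / Γ(d/2 + 1)`, the Lebesgue volume of the unit Euclidean ball
in `ℝ^d`. -/
noncomputable def unitBallVolume (d : ℕ) : ℝ :=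
  Real.pi ^ ((d : ℝ) / 2) / Real.Gamma ((d : ℝ) / 2 + 1)

open Filter Real Nat

theorem factorial_div_two_le_Gamma {d : ℕ} (hd : 2 ≤ d) :
    ((d / 2)! : ℝ) ≤ Gamma ((d : ℝ) / 2 + 1) := by
  have hm : (2 : ℝ) ≤ ((d / 2 : ℕ) : ℝ) + 1 := by
    have : (1 : ℝ) ≤ (d / 2 : ℕ) := by exact_mod_cast (by omega : 1 ≤ d / 2)
    linarith
  have hle : ((d / 2 : ℕ) : ℝ) + 1 ≤ (d : ℝ) / 2 + 1 := by
    have : ((2 * (d / 2) : ℕ) : ℝ) ≤ d := by exact_mod_cast Nat.mul_div_le d 2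
    push_cast at this
    linarith
  rw [← Gamma_nat_eq_factorial]
  exact Gamma_strictMonoOn_Ici.monotoneOn hm (Set.mem_Ici.mpr (hm.trans hle)) hle

theorem tendsto_pow_div_Gamma_half_add_one (a : ℝ) :
    Tendsto (fun d : ℕ => a ^ d / Gamma ((d : ℝ) / 2 + 1)) atTop (nhds 0) := by
  set b := max |a| 1
  have hb : 1 ≤ b := le_max_right _ _
  -- `b^d ≤ b^(2⌊d/2⌋ + 1)` lets the factorial `⌊d/2⌋!` absorb the power.
  have hbound : Tendsto (fun d : ℕ => b * ((b ^ 2) ^ (d / 2) / (d / 2)!)) atTop (nhds 0) := by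
    simpa only [mul_zero, Function.comp_def] using
      ((FloorSemiring.tendsto_pow_div_factorial_atTop (b ^ 2)).const_mul b).comp
        (Nat.tendsto_div_const_atTop two_ne_zero)
  refine squeeze_zero_norm' ?_ hbound
  filter_upwards [eventually_ge_atTop 2] with d hd
  have hΓ : 0 < Gamma ((d : ℝ) / 2 + 1) := Gamma_pos_of_pos (by positivity)
  have hpow : |a| ^ d ≤ b * (b ^ 2) ^ (d / 2) :=
    calc |a| ^ d ≤ b ^ d := pow_le_pow_left₀ (abs_nonneg a) (le_max_left _ _) d
      _ ≤ b ^ (2 * (d / 2) + 1) := pow_le_pow_right₀ hb (by omega)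
      _ = b * (b ^ 2) ^ (d / 2) := by ring
  calc ‖a ^ d / Gamma ((d : ℝ) / 2 + 1)‖ = |a| ^ d / Gamma ((d : ℝ) / 2 + 1) := by
        rw [norm_div, norm_pow, Real.norm_eq_abs, Real.norm_of_nonneg hΓ.le]
    _ ≤ b * (b ^ 2) ^ (d / 2) / (d / 2)! :=
        div_le_div₀ (by positivity) hpow (by positivity) (factorial_div_two_le_Gamma hd)
    _ = b * ((b ^ 2) ^ (d / 2) / (d / 2)!) := mul_div_assoc _ _ _

theorem unitBallVolume_mul_pow (Δ : ℝ) (d : ℕ) :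
    unitBallVolume d * Δ ^ d = (√π * Δ) ^ d / Gamma ((d : ℝ) / 2 + 1) := by
  rw [unitBallVolume, rpow_div_two_eq_sqrt _ pi_pos.le, rpow_natCast, mul_pow, div_mul_eq_mul_div]

theorem tendsto_unitBallVolume_mul_pow (Δ : ℝ) :
    Tendsto (fun d : ℕ => unitBallVolume d * Δ ^ d) atTop (nhds 0) := by
  simpa only [unitBallVolume_mul_pow] using tendsto_pow_div_Gamma_half_add_one (√π * Δ)

theorem no_valid_k_high_dimension_general
    (ω p0 Δ Cl : ℝ) (hCl : 0 < Cl)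
    (n : ℝ) (hn : 1 ≤ n) (ν : ℝ) (hν : ν ∈ Set.Ioo (0 : ℝ) 1)
    (ρ : ℝ) (hρ : ρ ∈ Set.Ioc (0 : ℝ) 1) :
    ∃ d0 : ℕ, ∀ d : ℕ, d0 ≤ d →
      (ω * unitBallVolume d * p0) * Δ ^ d * n
          < (Cl * d) * Real.log (1 / ν) ^ 2 * n ^ (ρ / (ρ + d)) ∧
        ¬∃ k : ℕ,
          (Cl * d) * Real.log (1 / ν) ^ 2 * n ^ (ρ / (ρ + d)) ≤ (k : ℝ) ∧
            (k : ℝ) ≤ (ω * unitBallVolume d * p0) * Δ ^ d * n := by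
  set c := Cl * Real.log (1 / ν) ^ 2
  have hc : 0 < c := mul_pos hCl (pow_pos (log_pos ((one_lt_div hν.1).mpr hν.2)) 2)
  have hupper : ∀ᶠ d : ℕ in atTop, (ω * unitBallVolume d * p0) * Δ ^ d * n < c := by
    have h := (tendsto_unitBallVolume_mul_pow Δ).const_mul (ω * p0 * n)
    rw [mul_zero] at h
    filter_upwards [h.eventually_lt_const hc] with d hd
    linarith
  obtain ⟨d0, hd0⟩ := (hupper.and (eventually_ge_atTop 1)).exists_forall_of_atTop
  refine ⟨d0, fun d hd => ?_⟩
  obtain ⟨hlt, hd1⟩ := hd0 d hd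
  have hlower : c ≤ (Cl * d) * Real.log (1 / ν) ^ 2 * n ^ (ρ / (ρ + d)) :=
    calc c = c * 1 * 1 := by ring
      _ ≤ c * d * n ^ (ρ / (ρ + d)) := by
          gcongr
          · exact_mod_cast hd1
          · have hρd : 0 < ρ + d := add_pos_of_pos_of_nonneg hρ.1 d.cast_nonneg
            exact one_le_rpow hn (div_nonneg hρ.1.le hρd.le)
      _ = (Cl * d) * Real.log (1 / ν) ^ 2 * n ^ (ρ / (ρ + d)) := by ring
  have hgap := hlt.trans_le hlower
  exact ⟨hgap, fun ⟨k, hk1, hk2⟩ => (hk1.trans hk2).not_gt hgap⟩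

/-- **High-dimensional k-NN vs Bayes: impossibility of the admissible range.**
With `K_u(d) = ω · V_d · p0` and `K_l(d) = C_l · d`, there is a threshold `d0` such
that for all `d ≥ d0` the upper endpoint drops below the lower endpoint:
`K_u(d) Δ^d n < K_l(d) (log(1/ν))² n^(ρ/(ρ+d))`, and in particular no natural number
`k` lies in the range `[K_l(d) (log(1/ν))² n^(ρ/(ρ+d)), K_u(d) Δ^d n]`. -/
theorem no_valid_k_high_dimension
    (ω p0 Δ Cl : ℝ) (hω : 0 < ω) (hp0 : 0 < p0) (hΔ : 0 < Δ) (hCl : 0 < Cl)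
    (n : ℝ) (hn : 1 ≤ n) (ν : ℝ) (hν : ν ∈ Set.Ioo (0 : ℝ) 1)
    (ρ : ℝ) (hρ : ρ ∈ Set.Ioc (0 : ℝ) 1) :
    ∃ d0 : ℕ, ∀ d : ℕ, d0 ≤ d →
      (ω * unitBallVolume d * p0) * Δ ^ d * n
          < (Cl * d) * Real.log (1 / ν) ^ 2 * n ^ (ρ / (ρ + d)) ∧
        ¬∃ k : ℕ,
          (Cl * d) * Real.log (1 / ν) ^ 2 * n ^ (ρ / (ρ + d)) ≤ (k : ℝ) ∧
            (k : ℝ) ≤ (ω * unitBallVolume d * p0) * Δ ^ d * n :=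
  no_valid_k_high_dimension_general ω p0 Δ Cl hCl n hn ν hν ρ hρ
end

section
/- Let sort(x) denote the non-decreasing rearrangement of x ∈ ℝ^d and let C = {y : y 0 < y 1 < … < y (d−1)} be the open cone of strictly increasing vectors. For every set A ⊆ C, the preimage of A under the sorting map decomposes as sort^{−1}(A) = ⋃_{σ ∈ S_d} {x : x ∘ σ ∈ A}, and the sets {x : x ∘ σ ∈ A}, indexed by the permutations σ of Fin d, are pairwise disjoint. -/
/-- **Decomposition of the preimage of the sorting map.**
For `A` a subset of the open cone `C = {y : y₀ < y₁ < ⋯ < y_{d-1}}` of strictly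
increasing vectors, `sort⁻¹(A) = ⋃_{σ ∈ S_d} {x : x ∘ σ ∈ A}`, and the sets
`{x : x ∘ σ ∈ A}` indexed by the permutations `σ` are pairwise disjoint. -/
theorem sort_preimage_decomposition (d : ℕ) (A : Set (Fin d → ℝ))
    (hAC : A ⊆ {y : Fin d → ℝ | StrictMono y}) :
    ((fun x : Fin d → ℝ => x ∘ Tuple.sort x) ⁻¹' A
        = ⋃ σ : Equiv.Perm (Fin d), {x : Fin d → ℝ | x ∘ σ ∈ A}) ∧
      Pairwise fun σ τ : Equiv.Perm (Fin d) =>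
        Disjoint {x : Fin d → ℝ | x ∘ σ ∈ A} {x : Fin d → ℝ | x ∘ τ ∈ A} := by
  have key : ∀ (x : Fin d → ℝ) (σ : Equiv.Perm (Fin d)), x ∘ σ ∈ A →
      x ∘ σ = x ∘ Tuple.sort x := by
    intro x σ h
    exact (Tuple.comp_sort_eq_comp_iff_monotone).mpr ((hAC h).monotone)
  constructor
  · ext x
    simp only [Set.mem_preimage, Set.mem_iUnion, Set.mem_setOf_eq]
    constructor
    · intro h; exact ⟨Tuple.sort x, h⟩
    · rintro ⟨σ, hσ⟩; rw [← key x σ hσ]; exact hσ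
  · intro σ τ hne
    rw [Set.disjoint_left]
    intro x hσ hτ
    have heq : x ∘ σ = x ∘ τ := by rw [key x σ hσ, key x τ hτ]
    have hinj : Function.Injective x := by
      have := (hAC hσ).injective
      intro a b hab
      have h2 : (x ∘ σ) (σ.symm a) = (x ∘ σ) (σ.symm b) := by
        simp [Function.comp, hab]
      simpa using this h2
    exact hne (Equiv.ext fun i => hinj (congrFun heq i))
end
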